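/- arXiv:1510.01946 — 8 statements merged into one kernel-verified Lean document; each statement's English description precedes it below -/
import Mathlib

section
/- If L is the Laplacian matrix of a weighted directed graph G on N nodes and G is connected (i.e., there exists a node reachable from all other nodes), then for the index i_R of such a reachable node, the matrix L + e_{i_R} e_{i_R}^T has full rank N, where e_{i_R} is the i_R-th standard basis vector. -/
/-!
Maximum principle: if `(L + e_r e_rᵀ) x = 0`, take `u` where `x` is maximal. At a maximum
`(L x) u = ∑ⱼ a u j (x u - x j) ≥ 0`, and off `r` it vanishes, so every out-neighbour of a maximum
that is not `r` is again a maximum. Following a path from `u` to `r` shows that `x r` is maximal,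
and then `(L x) r + x r = 0` forces `x r ≤ 0`. Hence `x ≤ 0`, likewise `-x ≤ 0`, so the kernel is
trivial.
-/

open Matrix

variable {ι : Type*} [Fintype ι] [DecidableEq ι]

def laplacian (a : ι → ι → ℝ) : Matrix ι ι ℝ :=
  diagonal (fun i => ∑ k, a i k) - of a

section Laplacian

variable (a : ι → ι → ℝ)

theorem laplacian_mulVec_apply (x : ι → ℝ) (i : ι) :
    (laplacian a *ᵥ x) i = ∑ j, a i j * (x i - x j) := by
  rw [laplacian, sub_mulVec, Pi.sub_apply, mulVec_diagonal]
  simp only [mulVec, dotProduct, of_apply, mul_sub, Finset.sum_sub_distrib, Finset.sum_mul]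

theorem laplacian_add_single_mulVec_apply (r : ι) (x : ι → ℝ) (i : ι) :
    ((laplacian a + single r r 1) *ᵥ x) i =
      (laplacian a *ᵥ x) i + if i = r then x r else 0 := by
  rw [add_mulVec, single_mulVec, Pi.add_apply, Function.update_apply, one_mul, Pi.zero_apply]

variable {a} (hnn : ∀ i j, 0 ≤ a i j)
include hnn

theorem laplacian_mulVec_nonneg_of_forall_le {x : ι → ℝ} {u : ι} (hmax : ∀ j, x j ≤ x u) :
    0 ≤ (laplacian a *ᵥ x) u := by
  rw [laplacian_mulVec_apply]
  exact Finset.sum_nonneg fun j _ => mul_nonneg (hnn u j) (sub_nonneg.2 (hmax j))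

theorem apply_eq_of_laplacian_mulVec_eq_zero_of_forall_le {x : ι → ℝ} {u v : ι}
    (hmax : ∀ j, x j ≤ x u) (hu : (laplacian a *ᵥ x) u = 0) (huv : 0 < a u v) : x v = x u := by
  rw [laplacian_mulVec_apply] at hu
  have hterms := (Finset.sum_eq_zero_iff_of_nonneg fun j _ =>
    mul_nonneg (hnn u j) (sub_nonneg.2 (hmax j))).1 hu v (Finset.mem_univ v)
  have := (mul_eq_zero.1 hterms).resolve_left huv.ne'
  linarith

theorem apply_eq_of_reflTransGen_of_forall_le {x : ι → ℝ} {r u : ι}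
    (hmax : ∀ j, x j ≤ x u) (hzero : ∀ i ≠ r, (laplacian a *ᵥ x) i = 0)
    (hpath : Relation.ReflTransGen (fun u v => 0 < a u v) u r) : x r = x u := by
  suffices ∀ b, Relation.ReflTransGen (fun u v => 0 < a u v) b r → x b = x u → x r = x u from
    this u hpath rfl
  intro b hb
  induction hb using Relation.ReflTransGen.head_induction_on with
  | refl => exact id
  | @head b c hbc _ ih =>
    intro hbu
    by_cases hbr : b = r
    · rwa [← hbr]
    · refine ih ?_
      rw [← hbu] at hmax ⊢
      exact apply_eq_of_laplacian_mulVec_eq_zero_of_forall_le hnn hmax (hzero b hbr) hbc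

theorem nonpos_of_laplacian_add_single_mulVec_eq_zero {r : ι}
    (hconn : ∀ j, Relation.ReflTransGen (fun u v => 0 < a u v) j r) {x : ι → ℝ}
    (hx : (laplacian a + single r r 1) *ᵥ x = 0) (i : ι) : x i ≤ 0 := by
  have hx_apply j := congrFun hx j
  simp only [laplacian_add_single_mulVec_apply, Pi.zero_apply] at hx_apply
  have : Nonempty ι := ⟨i⟩
  obtain ⟨u, hmax⟩ := Finite.exists_max x
  have hzero : ∀ j ≠ r, (laplacian a *ᵥ x) j = 0 := fun j hj => by
    simpa [hj] using hx_apply j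
  have hru := apply_eq_of_reflTransGen_of_forall_le hnn hmax hzero (hconn u)
  have hLr := laplacian_mulVec_nonneg_of_forall_le hnn (hru ▸ hmax)
  have hr : (laplacian a *ᵥ x) r + x r = 0 := by simpa using hx_apply r
  linarith [hmax i]

theorem laplacian_add_single_mulVec_eq_zero {r : ι}
    (hconn : ∀ j, Relation.ReflTransGen (fun u v => 0 < a u v) j r) {x : ι → ℝ}
    (hx : (laplacian a + single r r 1) *ᵥ x = 0) : x = 0 := by
  have hneg : (laplacian a + single r r 1) *ᵥ (-x) = 0 := by rw [mulVec_neg, hx, neg_zero]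
  funext i
  have hneg_i : -x i ≤ 0 := nonpos_of_laplacian_add_single_mulVec_eq_zero hnn hconn hneg i
  exact le_antisymm (nonpos_of_laplacian_add_single_mulVec_eq_zero hnn hconn hx i)
    (neg_nonpos.1 hneg_i)

theorem rank_laplacian_add_single {r : ι}
    (hconn : ∀ j, Relation.ReflTransGen (fun u v => 0 < a u v) j r) :
    (laplacian a + single r r 1).rank = Fintype.card ι := by
  refine rank_of_isUnit _ (mulVec_injective_iff_isUnit.1 ?_)
  exact LinearMap.ker_eq_bot.1 (ker_mulVecLin_eq_bot_iff.2 fun x =>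
    laplacian_add_single_mulVec_eq_zero hnn hconn)

end Laplacian

theorem stmt0_general {N : ℕ} (a : Fin N → Fin N → ℝ)
    (hnn : ∀ i j, 0 ≤ a i j)
    (L : Matrix (Fin N) (Fin N) ℝ)
    (hL : ∀ i j, L i j = (if i = j then ∑ k, a i k else 0) - a i j)
    (iR : Fin N)
    (hconn : ∀ j, Relation.ReflTransGen (fun u v => 0 < a u v) j iR) :
    (L + Matrix.single iR iR 1).rank = N := by
  have hL' : L = laplacian a := by
    ext i j
    rw [hL, laplacian, Matrix.sub_apply, diagonal_apply, of_apply]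
  rw [hL', rank_laplacian_add_single hnn hconn, Fintype.card_fin]

/-- If L is the Laplacian of a weighted digraph G on N nodes and G is
connected (there is a node iR reachable from all other nodes by directed paths), then
L + e_{iR} e_{iR}ᵀ has full rank N. -/
theorem stmt0 {N : ℕ} (a : Fin N → Fin N → ℝ)
    (hnn : ∀ i j, 0 ≤ a i j) (hdiag : ∀ i, a i i = 0)
    (L : Matrix (Fin N) (Fin N) ℝ)
    (hL : ∀ i j, L i j = (if i = j then ∑ k, a i k else 0) - a i j)
    (iR : Fin N)
    (hconn : ∀ j, Relation.ReflTransGen (fun u v => 0 < a u v) j iR) :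
    (L + Matrix.single iR iR 1).rank = N :=
  stmt0_general a hnn L hL iR hconn
end

section
/- Let L be the Laplacian of a weighted digraph G on N nodes and i_R an index. If there exists a positive diagonal matrix D such that M_D + M_D^T > 0 (positive definite), where M_D = D(L + e_{i_R} e_{i_R}^T), then rank(L) ≥ N − 1. -/
open Matrix

/-!
If `A x = 0` then `xᵀ (A + Aᵀ) x = 2 xᵀ A x = 0`, so positive definiteness of the
symmetric part of `D (L + e eᵀ)` forces `D (L + e eᵀ)`, hence `L + e eᵀ`, to be invertible.
Since `e eᵀ` has rank one and rank is subadditive, `N = rank (L + e eᵀ) ≤ rank L + 1`.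
-/

namespace Matrix

variable {m n R : Type*} [Fintype n]

theorem rank_add_le [Field R] (A B : Matrix m n R) : (A + B).rank ≤ A.rank + B.rank := by
  have hrange : LinearMap.range (A + B).mulVecLin ≤
      LinearMap.range A.mulVecLin ⊔ LinearMap.range B.mulVecLin := by
    rintro _ ⟨x, rfl⟩
    exact Submodule.mem_sup.2 ⟨A *ᵥ x, ⟨x, rfl⟩, B *ᵥ x, ⟨x, rfl⟩, (add_mulVec A B x).symm⟩
  exact (Submodule.finrank_mono hrange).trans (Submodule.finrank_add_le_finrank_add_finrank _ _)

theorem rank_single_le_one [CommSemiring R] [StrongRankCondition R] [DecidableEq m]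
    [DecidableEq n] (i : m) (j : n) : (single i j (1 : R)).rank ≤ 1 := by
  rw [single_eq_single_vecMulVec_single]
  exact rank_vecMulVec_le _ _

theorem isUnit_of_posDef_add_transpose [Field R] [LinearOrder R] [IsStrictOrderedRing R]
    [StarRing R] [TrivialStar R] [DecidableEq n] {A : Matrix n n R} (hA : (A + Aᵀ).PosDef) :
    IsUnit A := by
  refine mulVec_injective_iff_isUnit.mp <| (injective_iff_map_eq_zero A.mulVecLin).2 ?_
  intro x hx
  change A *ᵥ x = 0 at hx
  by_contra hx0
  have hquad : x ⬝ᵥ ((A + Aᵀ) *ᵥ x) = 0 := by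
    rw [add_mulVec, hx, zero_add, mulVec_transpose, dotProduct_comm, ← dotProduct_mulVec, hx,
      dotProduct_zero]
  simpa [hquad] using hA.dotProduct_mulVec_pos hx0

end Matrix

theorem stmt1_general {N : ℕ} (L : Matrix (Fin N) (Fin N) ℝ)
    (iR : Fin N)
    (h : ∃ d : Fin N → ℝ, (∀ i, 0 < d i) ∧
      ((Matrix.diagonal d * (L + Matrix.single iR iR 1)) +
        (Matrix.diagonal d * (L + Matrix.single iR iR 1))ᵀ).PosDef) :
    N - 1 ≤ L.rank := by
  obtain ⟨d, -, hpd⟩ := h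
  have hunit : IsUnit (L + single iR iR 1) :=
    isUnit_of_mul_isUnit_right (isUnit_of_posDef_add_transpose hpd)
  have hfull : N ≤ L.rank + 1 :=
    calc N = (L + single iR iR 1).rank := by rw [rank_of_isUnit _ hunit, Fintype.card_fin]
      _ ≤ L.rank + (single iR iR (1 : ℝ)).rank := rank_add_le _ _
      _ ≤ L.rank + 1 := Nat.add_le_add_left (rank_single_le_one iR iR) _
  omega

/-- If there is a positive diagonal D with M_D + M_Dᵀ positive definite,
where M_D = D(L + e_{iR} e_{iR}ᵀ) and L is a graph Laplacian, then rank L ≥ N - 1. -/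
theorem stmt1 {N : ℕ} (L : Matrix (Fin N) (Fin N) ℝ)
    (hrowsum : L *ᵥ (fun _ => (1 : ℝ)) = 0)
    (hoff : ∀ i j, i ≠ j → L i j ≤ 0)
    (iR : Fin N)
    (h : ∃ d : Fin N → ℝ, (∀ i, 0 < d i) ∧
      ((Matrix.diagonal d * (L + Matrix.single iR iR 1)) +
        (Matrix.diagonal d * (L + Matrix.single iR iR 1))ᵀ).PosDef) :
    N - 1 ≤ L.rank :=
  stmt1_general L iR h
end

section
/- If M ∈ ℝ^{N×N} has nonpositive off-diagonal entries and all its eigenvalues have strictly positive real part (so M is an M-matrix of full rank), then there exists a positive diagonal matrix D such that DM is strictly column diagonally dominant. -/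
/-!
Choose `t > 0` so small that `A = 1 - t • M` is entrywise nonnegative and every eigenvalue
`1 - t λ` of `A` lies in the open unit disc, which is possible because `Re λ > 0`. By Gelfand's
formula `A ^ p → 0`, so `(1 - A)⁻¹ = ∑_{k<p} A ^ k + (1 - A)⁻¹ A ^ p` shows that
`M⁻¹ = t (1 - A)⁻¹` is entrywise nonnegative. Then `d = 1ᵀ M⁻¹` is positive and `dᵀ M = 1ᵀ`: every
column of `diagonal d * M` sums to `1` and has nonpositive off-diagonal entries, so its diagonal
entry exceeds the sum of the absolute values of the others.
-/

open Matrix Filter Topology NNReal ENNReal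

theorem tendsto_pow_atTop_nhds_zero_of_forall_norm_lt_one {A : Type*} [NormedRing A]
    [NormedAlgebra ℂ A] [CompleteSpace A] {a : A} (h : ∀ z ∈ spectrum ℂ a, ‖z‖ < 1) :
    Tendsto (a ^ ·) atTop (𝓝 0) := by
  rcases subsingleton_or_nontrivial A with hA | hA
  · simpa only [Subsingleton.elim _ (0 : A)] using tendsto_const_nhds
  have hρ : spectralRadius ℂ a < (1 : ℝ≥0) :=
    spectrum.spectralRadius_lt_of_forall_lt a fun z hz => by exact_mod_cast h z hz
  obtain ⟨r, hρr, hr1⟩ := ENNReal.lt_iff_exists_nnreal_btwn.1 hρ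
  refine squeeze_zero_norm' ?_ (tendsto_pow_atTop_nhds_zero_of_lt_one r.2 (mod_cast hr1))
  filter_upwards [(spectrum.gelfand_formula a).eventually (gt_mem_nhds hρr),
    eventually_ne_atTop 0] with p hp hp0
  rw [one_div] at hp
  have : (‖a ^ p‖₊ : ℝ≥0∞) < (r : ℝ≥0∞) ^ p := by
    simpa only [ENNReal.rpow_inv_natCast_pow hp0] using ENNReal.pow_lt_pow_left hp0 hp
  exact_mod_cast this.le

theorem spectrum.one_sub_smul_eq_image {𝕜 A : Type*} [Field 𝕜] [Ring A] [Algebra 𝕜 A]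
    (a : A) {t : 𝕜} (ht : t ≠ 0) :
    spectrum 𝕜 (1 - t • a) = (fun z => 1 - t * z) '' spectrum 𝕜 a := by
  have : (1 : A) - t • a = algebraMap 𝕜 A 1 - (Units.mk0 t ht) • a := by simp
  rw [this, ← spectrum.singleton_sub_eq, spectrum.unit_smul_eq_smul, Set.singleton_sub,
    ← Set.image_smul, Set.image_image]
  rfl

theorem Complex.norm_one_sub_mul_lt_one {z : ℂ} {t : ℝ} (ht : 0 < t)
    (h : t * ‖z‖ ^ 2 < 2 * z.re) : ‖1 - t * z‖ < 1 := by
  rw [← sq_lt_one_iff₀ (norm_nonneg _), Complex.sq_norm, Complex.normSq_apply]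
  rw [Complex.sq_norm, Complex.normSq_apply] at h
  simp only [Complex.sub_re, Complex.one_re, Complex.mul_re, Complex.ofReal_re,
    Complex.ofReal_im, Complex.sub_im, Complex.one_im, Complex.mul_im]
  nlinarith

theorem eventually_mul_lt_nhdsGT_zero (c : ℝ) {d : ℝ} (hd : 0 < d) :
    ∀ᶠ t in 𝓝[>] (0 : ℝ), t * c < d :=
  (((continuous_mul_const c).tendsto' 0 0 (zero_mul c)).mono_left
    nhdsWithin_le_nhds).eventually (gt_mem_nhds hd)

theorem eventually_forall_norm_one_sub_mul_lt_one {S : Set ℂ} (hS : S.Finite)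
    (hre : ∀ z ∈ S, 0 < z.re) : ∀ᶠ t : ℝ in 𝓝[>] 0, ∀ z ∈ S, ‖1 - t * z‖ < 1 := by
  refine (eventually_all_finite hS).2 fun z hz => ?_
  filter_upwards [eventually_mul_lt_nhdsGT_zero (‖z‖ ^ 2) (d := 2 * z.re)
    (by linarith [hre z hz]), self_mem_nhdsWithin] with t ht ht0
  exact Complex.norm_one_sub_mul_lt_one ht0 ht

theorem sum_erase_abs_lt_abs_of_sum_pos {ι : Type*} [Fintype ι] [DecidableEq ι] {w : ι → ℝ}
    {j : ι} (hoff : ∀ i, i ≠ j → w i ≤ 0) (hsum : 0 < ∑ i, w i) :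
    ∑ i ∈ Finset.univ.erase j, |w i| < |w j| := by
  have habs : ∑ i ∈ Finset.univ.erase j, |w i| = -∑ i ∈ Finset.univ.erase j, w i := by
    rw [← Finset.sum_neg_distrib]
    exact Finset.sum_congr rfl fun i hi => abs_of_nonpos (hoff i (Finset.ne_of_mem_erase hi))
  have hnonneg : 0 ≤ ∑ i ∈ Finset.univ.erase j, |w i| :=
    Finset.sum_nonneg fun i _ => abs_nonneg _
  rw [← Finset.add_sum_erase _ _ (Finset.mem_univ j)] at hsum
  rw [habs] at hnonneg ⊢
  rw [abs_of_pos (by linarith)]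
  linarith

namespace Matrix

variable {n : Type*} [Fintype n] [DecidableEq n]

attribute [local instance] Matrix.linftyOpNormedRing Matrix.linftyOpNormedAlgebra in
theorem tendsto_pow_of_forall_norm_lt_one {A : Matrix n n ℝ}
    (h : ∀ z ∈ spectrum ℂ (A.map Complex.ofReal), ‖z‖ < 1) :
    Tendsto (A ^ ·) atTop (𝓝 0) := by
  have hre : ∀ k, A ^ k = (A.map Complex.ofReal ^ k).map Complex.re := fun k => by
    rw [show A.map Complex.ofReal = A.map Complex.ofRealHom from rfl, ← Matrix.map_pow]
    ext; simp
  simpa [Function.comp_def, ← hre] using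
    ((continuous_id.matrix_map Complex.continuous_re).tendsto 0).comp
      (tendsto_pow_atTop_nhds_zero_of_forall_norm_lt_one h)

theorem apply_nonneg_of_mul_one_sub_eq_one {α : Type*} [Ring α] [PartialOrder α]
    [IsOrderedRing α] [TopologicalSpace α] [IsTopologicalRing α] [OrderClosedTopology α]
    {A C : Matrix n n α} (hA : ∀ i j, 0 ≤ A i j) (hpow : Tendsto (A ^ ·) atTop (𝓝 0))
    (hC : C * (1 - A) = 1) (i j : n) : 0 ≤ C i j := by
  have hgeom : ∀ p, C = ∑ k ∈ Finset.range p, A ^ k + C * A ^ p := fun p => by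
    calc C = C * ((1 - A) * ∑ k ∈ Finset.range p, A ^ k + A ^ p) := by
          rw [mul_neg_geom_sum, sub_add_cancel, mul_one]
      _ = _ := by rw [mul_add, ← mul_assoc, hC, one_mul]
  have hlim : Tendsto (fun p => (C * A ^ p) i j) atTop (𝓝 0) :=
    ((continuous_const.matrix_mul continuous_id).matrix_elem i j).tendsto' 0 0
      (by simp) |>.comp hpow
  refine le_of_tendsto' hlim fun p => ?_
  conv_rhs => rw [hgeom p]
  rw [add_apply, sum_apply]
  exact le_add_of_nonneg_left (Finset.sum_nonneg fun k _ => pow_apply_nonneg hA k i j)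

theorem isUnit_det_of_forall_re_spectrum_pos {M : Matrix n n ℝ}
    (heig : ∀ μ ∈ spectrum ℂ (M.map Complex.ofReal), 0 < μ.re) : IsUnit M.det := by
  have hMc : IsUnit (M.map Complex.ofReal) := by
    by_contra h
    simpa using heig 0 ((spectrum.zero_mem_iff ℂ).2 h)
  rwa [isUnit_iff_isUnit_det, show M.map Complex.ofReal = Complex.ofRealHom.mapMatrix M from rfl,
    ← RingHom.map_det, isUnit_map_iff] at hMc

theorem inv_apply_nonneg_of_forall_re_spectrum_pos {M : Matrix n n ℝ}
    (hoff : ∀ i j, i ≠ j → M i j ≤ 0)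
    (heig : ∀ μ ∈ spectrum ℂ (M.map Complex.ofReal), 0 < μ.re) (i j : n) :
    0 ≤ M⁻¹ i j := by
  obtain ⟨t, ⟨hspec, hdiag⟩, ht⟩ :=
    ((eventually_forall_norm_one_sub_mul_lt_one (finite_spectrum _) heig).and
      ((eventually_all (l := 𝓝[>] (0 : ℝ))).2 fun i =>
        eventually_mul_lt_nhdsGT_zero (M i i) one_pos)).and self_mem_nhdsWithin |>.exists
  set A := 1 - t • M
  have hA : ∀ i j, 0 ≤ A i j := fun i j => by
    rcases eq_or_ne i j with rfl | h
    · simpa [A] using (hdiag i).le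
    · simpa [A, h] using mul_nonpos_of_nonneg_of_nonpos ht.le (hoff i j h)
  have hAc : A.map Complex.ofReal = 1 - (t : ℂ) • M.map Complex.ofReal := by
    ext i j; by_cases h : i = j <;> simp [A, h]
  have hpow : Tendsto (A ^ ·) atTop (𝓝 0) := by
    refine tendsto_pow_of_forall_norm_lt_one ?_
    rw [hAc, spectrum.one_sub_smul_eq_image _ (mod_cast ht.ne')]
    rintro _ ⟨z, hz, rfl⟩
    exact hspec z hz
  have hC : (t⁻¹ • M⁻¹) * (1 - A) = 1 := by
    rw [show 1 - A = t • M by simp [A], smul_mul_smul_comm, inv_mul_cancel₀ ht.ne', one_smul,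
      nonsing_inv_mul _ (isUnit_det_of_forall_re_spectrum_pos heig)]
  exact (mul_nonneg_iff_of_pos_left (inv_pos.2 ht)).1
    (apply_nonneg_of_mul_one_sub_eq_one hA hpow hC i j)

theorem exists_pos_vecMul_eq_one {M : Matrix n n ℝ} (hM : IsUnit M.det)
    (hinv : ∀ i j, 0 ≤ M⁻¹ i j) : ∃ d : n → ℝ, (∀ i, 0 < d i) ∧ d ᵥ* M = 1 := by
  refine ⟨1 ᵥ* M⁻¹, fun i => ?_, ?_⟩
  · obtain ⟨l, hl⟩ : ∃ l, M⁻¹ l i ≠ 0 := by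
      by_contra! h
      simpa [mul_apply, h] using congrFun (congrFun (mul_nonsing_inv M hM) i) i
    simp only [vecMul, dotProduct, Pi.one_apply, one_mul]
    exact Finset.sum_pos' (fun k _ => hinv k i) ⟨l, Finset.mem_univ l, (hinv l i).lt_of_ne' hl⟩
  · rw [vecMul_vecMul, nonsing_inv_mul _ hM, vecMul_one]

end Matrix

/-- If M has nonpositive off-diagonal entries and all eigenvalues with
strictly positive real part (full-rank M-matrix), then some positive diagonal D makes
DM strictly column diagonally dominant. -/
theorem stmt2 {N : ℕ} (M : Matrix (Fin N) (Fin N) ℝ)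
    (hoff : ∀ i j, i ≠ j → M i j ≤ 0)
    (heig : ∀ μ ∈ spectrum ℂ (M.map Complex.ofReal), 0 < μ.re) :
    ∃ d : Fin N → ℝ, (∀ i, 0 < d i) ∧
      ∀ j, ∑ i ∈ Finset.univ.erase j, |(Matrix.diagonal d * M) i j| <
        |(Matrix.diagonal d * M) j j| := by
  obtain ⟨d, hd, hdM⟩ := exists_pos_vecMul_eq_one (isUnit_det_of_forall_re_spectrum_pos heig)
    (inv_apply_nonneg_of_forall_re_spectrum_pos hoff heig)
  refine ⟨d, hd, fun j => ?_⟩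
  have hcol : ∑ i, d i * M i j = 1 := congrFun hdM j
  simp only [diagonal_mul]
  exact sum_erase_abs_lt_abs_of_sum_pos
    (fun i hij => mul_nonpos_of_nonneg_of_nonpos (hd i).le (hoff i j hij)) (hcol ▸ one_pos)
end

section
/- Suppose X ≥ 0 solves the algebraic Riccati equation A^T X + X A − X B B^T X + Q = 0 with Q positive semidefinite, and let F = B^T X with A − BF Hurwitz. Then the transfer matrix T_F(s) = F(sI − A + BF)^{-1} B is positive real, i.e., T_F(s) + T_F(s)^* ≥ 0 for all s with Re(s) > 0. -/
/-!
Along the closed loop `K = A - BF` the Riccati equation becomes the Lyapunov equation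
`KᴴX + XK = -(Q + FᴴF)`. Hence `M = sI - K` satisfies `MᴴX + XM = 2 Re(s) X + Q + FᴴF ≥ 0`, and
since `F = BᴴX` the Hermitian part of the transfer matrix is the congruence
`T + Tᴴ = (M⁻¹B)ᴴ (MᴴX + XM) (M⁻¹B)`. Invertibility of `M` for `Re s > 0` is the Hurwitz property.
-/

open Matrix ComplexOrder

/-- All eigenvalues (over ℂ) have negative real part. -/
def Hurwitz {n : Type*} [Fintype n] [DecidableEq n] (M : Matrix n n ℝ) : Prop :=
  ∀ μ ∈ spectrum ℂ (M.map Complex.ofReal), μ.re < 0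

namespace Matrix

section ofReal

variable {k l p : Type*}

@[simp]
lemma map_ofReal_add (M N : Matrix k l ℝ) :
    (M + N).map Complex.ofReal = M.map Complex.ofReal + N.map Complex.ofReal :=
  Matrix.map_add _ Complex.ofReal_add M N

@[simp]
lemma map_ofReal_sub (M N : Matrix k l ℝ) :
    (M - N).map Complex.ofReal = M.map Complex.ofReal - N.map Complex.ofReal :=
  Matrix.map_sub _ Complex.ofReal_sub M N

@[simp]
lemma map_ofReal_mul [Fintype l] (M : Matrix k l ℝ) (N : Matrix l p ℝ) :
    (M * N).map Complex.ofReal = M.map Complex.ofReal * N.map Complex.ofReal :=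
  Matrix.map_mul (f := Complex.ofRealHom)

@[simp]
lemma transpose_map_ofReal (M : Matrix k l ℝ) :
    Mᵀ.map Complex.ofReal = (M.map Complex.ofReal)ᴴ := by
  ext i j; simp

lemma PosSemidef.map_ofReal [Fintype k] [DecidableEq k] {X : Matrix k k ℝ} (hX : X.PosSemidef) :
    (X.map Complex.ofReal).PosSemidef := by
  obtain ⟨C, rfl⟩ : ∃ C : Matrix k k ℝ, X = Cᵀ * C := by
    open scoped MatrixOrder in
    obtain ⟨C, hC⟩ := CStarAlgebra.nonneg_iff_eq_star_mul_self.mp hX.nonneg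
    exact ⟨C, by rwa [star_eq_conjTranspose, conjTranspose_eq_transpose_of_trivial] at hC⟩
  simpa using posSemidef_conjTranspose_mul_self (C.map Complex.ofReal)

end ofReal

section RCLike

variable {𝕜 n m : Type*} [RCLike 𝕜] [Fintype n] [Fintype m]

lemma riccati_closedLoop_lyapunov {A X Q : Matrix n n 𝕜} (B : Matrix n m 𝕜) (hX : X.IsHermitian)
    (hare : Aᴴ * X + X * A - X * B * Bᴴ * X + Q = 0) :
    (A - B * (Bᴴ * X))ᴴ * X + X * (A - B * (Bᴴ * X)) = -(Q + (Bᴴ * X)ᴴ * (Bᴴ * X)) := by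
  rw [← sub_eq_zero, ← hare]
  simp only [conjTranspose_sub, conjTranspose_mul, conjTranspose_conjTranspose, hX.eq,
    Matrix.sub_mul, Matrix.mul_sub, Matrix.mul_assoc]
  abel

lemma posSemidef_smul_one_sub_lyapunov [DecidableEq n] {K X P : Matrix n n 𝕜} (hX : X.PosSemidef)
    (hP : P.PosSemidef) (hK : Kᴴ * X + X * K = -P) {s : 𝕜} (hs : 0 ≤ RCLike.re s) :
    ((s • 1 - K)ᴴ * X + X * (s • 1 - K)).PosSemidef := by
  have hexpand : (s • 1 - K)ᴴ * X + X * (s • 1 - K) = (star s + s) • X + P := by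
    simp only [conjTranspose_sub, conjTranspose_smul, conjTranspose_one, Matrix.sub_mul,
      Matrix.mul_sub, smul_mul_assoc, mul_smul_comm, Matrix.one_mul, Matrix.mul_one]
    rw [sub_add_sub_comm, hK, sub_neg_eq_add, ← add_smul]
  have hconj : 0 ≤ star s + s := by
    rw [add_comm, RCLike.star_def, RCLike.add_conj]
    exact mul_nonneg zero_le_two (RCLike.ofReal_nonneg.mpr hs)
  rw [hexpand]
  exact (hX.smul hconj).add hP

lemma posSemidef_mul_nonsing_inv_add_conjTranspose [DecidableEq n] {M X : Matrix n n 𝕜}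
    (B : Matrix n m 𝕜) (hX : X.IsHermitian) (hM : IsUnit M.det) (h : (Mᴴ * X + X * M).PosSemidef) :
    (Bᴴ * X * M⁻¹ * B + (Bᴴ * X * M⁻¹ * B)ᴴ).PosSemidef := by
  have hMinv (Y : Matrix n m 𝕜) : M * (M⁻¹ * Y) = Y := M.mul_nonsing_inv_cancel_left Y hM
  have hMinvH (Y : Matrix n m 𝕜) : M⁻¹ᴴ * (Mᴴ * Y) = Y := by
    rw [← Matrix.mul_assoc, ← conjTranspose_mul, M.mul_nonsing_inv hM, conjTranspose_one,
      Matrix.one_mul]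
  have hcongr : Bᴴ * X * M⁻¹ * B + (Bᴴ * X * M⁻¹ * B)ᴴ =
      (M⁻¹ * B)ᴴ * (Mᴴ * X + X * M) * (M⁻¹ * B) := by
    simp only [conjTranspose_mul, conjTranspose_conjTranspose, hX.eq, Matrix.mul_add,
      Matrix.add_mul, Matrix.mul_assoc, hMinv, hMinvH]
  rw [hcongr]
  exact h.conjTranspose_mul_mul_same _

theorem posSemidef_transfer_add_conjTranspose_of_riccati [DecidableEq n] {A X Q : Matrix n n 𝕜}
    {B : Matrix n m 𝕜} (hX : X.PosSemidef) (hQ : Q.PosSemidef)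
    (hare : Aᴴ * X + X * A - X * B * Bᴴ * X + Q = 0) {s : 𝕜} (hs : 0 ≤ RCLike.re s)
    (hM : IsUnit (s • 1 - A + B * (Bᴴ * X)).det) :
    (Bᴴ * X * (s • 1 - A + B * (Bᴴ * X))⁻¹ * B +
      (Bᴴ * X * (s • 1 - A + B * (Bᴴ * X))⁻¹ * B)ᴴ).PosSemidef := by
  have hK := riccati_closedLoop_lyapunov B hX.isHermitian hare
  have hP : (Q + (Bᴴ * X)ᴴ * (Bᴴ * X)).PosSemidef := hQ.add (posSemidef_conjTranspose_mul_self _)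
  rw [sub_add] at hM ⊢
  exact posSemidef_mul_nonsing_inv_add_conjTranspose B hX.isHermitian hM
    (posSemidef_smul_one_sub_lyapunov hX hP hK hs)

end RCLike

end Matrix

lemma Hurwitz.isUnit_det_smul_one_sub {n : Type*} [Fintype n] [DecidableEq n] {K : Matrix n n ℝ}
    (hK : Hurwitz K) {s : ℂ} (hs : 0 ≤ s.re) : IsUnit (s • 1 - K.map Complex.ofReal).det := by
  rw [← isUnit_iff_isUnit_det, ← Algebra.algebraMap_eq_smul_one]
  exact spectrum.notMem_iff.mp fun h => (hK s h).not_ge hs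

/-- If X ≥ 0 solves the ARE AᵀX + XA − XBBᵀX + Q = 0 with Q ≥ 0,
F = BᵀX and A − BF Hurwitz, then T_F(s) = F(sI − A + BF)⁻¹B is positive real:
T_F(s) + T_F(s)* ≥ 0 for all s with Re(s) > 0. -/
theorem stmt6 {n m : ℕ} (A : Matrix (Fin n) (Fin n) ℝ) (B : Matrix (Fin n) (Fin m) ℝ)
    (Q X : Matrix (Fin n) (Fin n) ℝ) (hQ : Q.PosSemidef) (hX : X.PosSemidef)
    (hare : Aᵀ * X + X * A - X * B * Bᵀ * X + Q = 0)
    (F : Matrix (Fin m) (Fin n) ℝ) (hF : F = Bᵀ * X)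
    (hH : Hurwitz (A - B * F)) :
    ∀ s : ℂ, 0 < s.re →
      ((F.map Complex.ofReal *
          (s • (1 : Matrix (Fin n) (Fin n) ℂ) - A.map Complex.ofReal +
            B.map Complex.ofReal * F.map Complex.ofReal)⁻¹ * B.map Complex.ofReal) +
        (F.map Complex.ofReal *
          (s • (1 : Matrix (Fin n) (Fin n) ℂ) - A.map Complex.ofReal +
            B.map Complex.ofReal * F.map Complex.ofReal)⁻¹ * B.map Complex.ofReal)ᴴ).PosSemidef := by
  intro s hs
  have hFc : F.map Complex.ofReal = (B.map Complex.ofReal)ᴴ * X.map Complex.ofReal := by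
    simp [hF]
  have hareC := congrArg (·.map Complex.ofReal) hare
  simp only [map_ofReal_add, map_ofReal_sub, map_ofReal_mul, transpose_map_ofReal,
    Matrix.map_zero _ Complex.ofReal_zero] at hareC
  have hdet := hH.isUnit_det_smul_one_sub hs.le
  rw [map_ofReal_sub, map_ofReal_mul, ← sub_add, hFc] at hdet
  rw [hFc]
  exact posSemidef_transfer_add_conjTranspose_of_riccati hX.map_ofReal hQ.map_ofReal hareC hs.le
    hdet
end

section
/- Let T(s) = diag(T_1(s),…,T_N(s)) where each T_i(s) is a stable strictly positive real square transfer matrix, and let Z ∈ ℝ^{N m × N m} be a constant matrix with Z + Z^T > 0. Then det[I + T(s) Z] ≠ 0 for all s with Re(s) ≥ 0. -/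
open Matrix Kronecker ComplexOrder

/-!
If `(1 + A B) v = 0` with `v ≠ 0`, put `w = B v`, so that `v = -A w`. Then
`v* B v = v* w = -(A w)* w`, hence `v* (B + B*) v = -w* (A + A*) w`. The left side is positive
when `B + B*` is positive definite, the right side is nonpositive when `A + A*` is positive
semidefinite. With `A = diag(T_i(s))` and `B = Z` this excludes zeros of `det (1 + T(s) Z)`.
-/

namespace Matrix

variable {n o R : Type*} [Fintype n] [Fintype o]

theorem star_dotProduct_add_conjTranspose_mulVec [CommSemiring R] [StarRing R]
    (A : Matrix n n R) (x : n → R) :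
    star x ⬝ᵥ ((A + Aᴴ) *ᵥ x) = star x ⬝ᵥ (A *ᵥ x) + star (star x ⬝ᵥ (A *ᵥ x)) := by
  rw [add_mulVec, dotProduct_add, star_dotProduct, star_mulVec, star_star, dotProduct_mulVec]

theorem det_one_add_mul_ne_zero_of_posSemidef_of_posDef [CommRing R] [IsDomain R] [StarRing R]
    [PartialOrder R] [IsOrderedAddMonoid R] [DecidableEq n] {A B : Matrix n n R}
    (hA : (A + Aᴴ).PosSemidef) (hB : (B + Bᴴ).PosDef) : (1 + A * B).det ≠ 0 := by
  intro hdet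
  obtain ⟨v, hv0, hv⟩ := exists_mulVec_eq_zero_iff.2 hdet
  set w := B *ᵥ v
  have hv_eq : v = -(A *ᵥ w) := by
    rw [add_mulVec, one_mulVec, ← mulVec_mulVec] at hv
    exact eq_neg_of_add_eq_zero_left hv
  have hquad : star v ⬝ᵥ (B *ᵥ v) = -star (star w ⬝ᵥ (A *ᵥ w)) :=
    calc star v ⬝ᵥ (B *ᵥ v) = star (-(A *ᵥ w)) ⬝ᵥ w := by rw [← hv_eq]
      _ = -star (star w ⬝ᵥ (A *ᵥ w)) := by rw [star_neg, neg_dotProduct, star_dotProduct]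
  have hpos := hB.dotProduct_mulVec_pos hv0
  rw [star_dotProduct_add_conjTranspose_mulVec, hquad, star_neg, star_star, ← neg_add, add_comm,
    ← star_dotProduct_add_conjTranspose_mulVec] at hpos
  exact (hA.dotProduct_mulVec_nonneg w).not_gt (neg_pos.mp hpos)

theorem star_dotProduct_blockDiagonal_mulVec [NonUnitalCommSemiring R] [StarRing R]
    [DecidableEq o] (M : o → Matrix n n R) (v : n × o → R) :
    star v ⬝ᵥ (blockDiagonal M *ᵥ v) =
      ∑ k, star (fun i => v (i, k)) ⬝ᵥ (M k *ᵥ fun i => v (i, k)) := by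
  simp only [dotProduct, mulVec, Pi.star_apply, blockDiagonal_apply, Fintype.sum_prod_type,
    ite_mul, zero_mul]
  rw [Finset.sum_comm]
  refine Finset.sum_congr rfl fun k _ => Finset.sum_congr rfl fun i _ => ?_
  rw [Finset.sum_comm]
  simp

theorem PosSemidef.blockDiagonal [CommRing R] [StarRing R] [PartialOrder R]
    [IsOrderedAddMonoid R] [DecidableEq o] {M : o → Matrix n n R} (h : ∀ k, (M k).PosSemidef) :
    (blockDiagonal M).PosSemidef := by
  refine .of_dotProduct_mulVec_nonneg ?_ fun v => ?_
  · rw [IsHermitian, blockDiagonal_conjTranspose]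
    exact congrArg _ (funext fun k => (h k).1)
  · rw [star_dotProduct_blockDiagonal_mulVec]
    exact Finset.sum_nonneg fun k _ => (h k).dotProduct_mulVec_nonneg _

variable {𝕜 : Type*} [RCLike 𝕜]

theorem re_star_dotProduct_map_ofReal_mulVec (M : Matrix n n ℝ) (x : n → 𝕜) :
    RCLike.re (star x ⬝ᵥ (M.map RCLike.ofReal *ᵥ x)) =
      (fun i => RCLike.re (x i)) ⬝ᵥ (M *ᵥ fun i => RCLike.re (x i)) +
        (fun i => RCLike.im (x i)) ⬝ᵥ (M *ᵥ fun i => RCLike.im (x i)) := by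
  simp only [dotProduct, mulVec, Pi.star_apply, Finset.mul_sum, ← Finset.sum_add_distrib,
    map_sum]
  refine Finset.sum_congr rfl fun i _ => Finset.sum_congr rfl fun j _ => ?_
  simp only [RCLike.mul_re, RCLike.mul_im, RCLike.ofReal_re, RCLike.ofReal_im, map_apply,
    RCLike.star_def, RCLike.conj_re, RCLike.conj_im]
  ring

theorem PosDef.map_ofReal {M : Matrix n n ℝ} (hM : M.PosDef) :
    (M.map (RCLike.ofReal : ℝ → 𝕜)).PosDef := by
  have hherm := hM.isHermitian.map _ fun x => (RCLike.conj_ofReal (K := 𝕜) x).symm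
  refine .of_dotProduct_mulVec_pos hherm fun x hx =>
    RCLike.pos_iff.2 ⟨?_, hherm.im_star_dotProduct_mulVec_self x⟩
  rw [re_star_dotProduct_map_ofReal_mulVec]
  by_cases hre : (fun i => RCLike.re (x i)) = 0
  · have him : (fun i => RCLike.im (x i)) ≠ 0 := fun him => hx <| funext fun i =>
      RCLike.ext (by simpa using congrFun hre i) (by simpa using congrFun him i)
    exact add_pos_of_nonneg_of_pos (hM.posSemidef.dotProduct_mulVec_nonneg _)
      (by simpa using hM.dotProduct_mulVec_pos him)
  · exact add_pos_of_pos_of_nonneg (by simpa using hM.dotProduct_mulVec_pos hre)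
      (hM.posSemidef.dotProduct_mulVec_nonneg _)

end Matrix

/-- If T(s) = diag(T_1(s),…,T_N(s)) with each T_i a stable strictly
positive real m×m transfer matrix (so that T_i(s) + T_i(s)* > 0 throughout the
closed right half-plane), and Z is a constant real matrix with Z + Zᵀ > 0, then
det[I + T(s)Z] ≠ 0 for all s with Re(s) ≥ 0. -/
theorem stmt7 {N m : ℕ} (T : Fin N → ℂ → Matrix (Fin m) (Fin m) ℂ)
    (hspr : ∀ i, ∀ s : ℂ, 0 ≤ s.re → ((T i s) + (T i s)ᴴ).PosDef)
    (Z : Matrix (Fin m × Fin N) (Fin m × Fin N) ℝ)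
    (hZ : (Z + Zᵀ).PosDef) :
    ∀ s : ℂ, 0 ≤ s.re →
      ((1 : Matrix (Fin m × Fin N) (Fin m × Fin N) ℂ) +
        Matrix.blockDiagonal (fun i => T i s) * Z.map Complex.ofReal).det ≠ 0 := by
  intro s hs
  refine det_one_add_mul_ne_zero_of_posSemidef_of_posDef ?_ ?_
  · rw [blockDiagonal_conjTranspose, ← blockDiagonal_add]
    exact .blockDiagonal fun i => (hspr i s hs).posSemidef
  · have hsymm :
        Z.map Complex.ofReal + (Z.map Complex.ofReal)ᴴ = (Z + Zᵀ).map Complex.ofReal := by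
      ext; simp
    rw [hsymm]
    exact hZ.map_ofReal
end

section
/- Suppose the algebraic Riccati equation A^T X + X A − X B B^T X + Q = 0 has a stabilizing solution X ≥ 0 (so A − B B^T X is Hurwitz), Q ≥ 0, and let d > 0 and 0 < ε < 2/d. Then A − B (εd)^{-1} B^T X is also Hurwitz. -/
/-!
Put `c = (εd)⁻¹` and `M = A - c BBᵀX`. The Riccati equation turns into the Lyapunov identity
`MᵀX + XM + Q + (2c - 1)(BᵀX)ᵀ(BᵀX) = 0`, and `2c - 1 > 0` because `εd < 2`.
If `Mv = μv` with `Re μ ≥ 0`, the quadratic form of this identity at `v` is a sum of three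
nonnegative terms, `2 Re μ · v*Xv + v*Qv + (2c - 1)‖BᵀXv‖² = 0`, so `BᵀXv = 0`.
Then `(A - BBᵀX)v = Mv = μv`, contradicting that `A - BBᵀX` is Hurwitz.
-/

open Matrix

open scoped ComplexOrder

variable {m n : Type*} [Fintype m] [Fintype n]

namespace Matrix

theorem mem_spectrum_iff_exists_mulVec_eq_smul {K : Type*} [Field K] [DecidableEq n]
    {M : Matrix n n K} {μ : K} : μ ∈ spectrum K M ↔ ∃ v ≠ 0, M *ᵥ v = μ • v := by
  rw [← spectrum_toLin', ← Module.End.hasEigenvalue_iff_mem_spectrum]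
  constructor
  · intro h
    obtain ⟨v, hv, hv0⟩ := h.exists_hasEigenvector
    exact ⟨v, hv0, by simpa using Module.End.mem_eigenspace_iff.mp hv⟩
  · rintro ⟨v, hv0, hv⟩
    exact Module.End.hasEigenvalue_of_hasEigenvector
      ⟨Module.End.mem_eigenspace_iff.mpr (by simpa using hv), hv0⟩

theorem map_ofReal_mul_s8 {l o : Type*} (L : Matrix l n ℝ) (K : Matrix n o ℝ) :
    (L * K).map Complex.ofReal = L.map Complex.ofReal * K.map Complex.ofReal :=
  Matrix.map_mul (f := Complex.ofRealHom)

theorem PosSemidef.map_ofReal_s8 [DecidableEq n] {M : Matrix n n ℝ} (hM : M.PosSemidef) :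
    (M.map Complex.ofReal).PosSemidef := by
  obtain ⟨L, rfl⟩ : ∃ L : Matrix n n ℝ, M = Lᴴ * L := by
    open scoped MatrixOrder Matrix.Norms.L2Operator in
    exact CStarAlgebra.nonneg_iff_eq_star_mul_self.mp hM.nonneg
  rw [map_ofReal_mul_s8]
  convert posSemidef_conjTranspose_mul_self (L.map Complex.ofReal) using 2
  ext i j
  simp

theorem dotProduct_conjTranspose_mulVec {α : Type*} [CommSemiring α] [StarRing α]
    (M : Matrix m n α) (u : m → α) (v : n → α) : star v ⬝ᵥ (Mᴴ *ᵥ u) = star (M *ᵥ v) ⬝ᵥ u := by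
  rw [star_mulVec, dotProduct_mulVec]

theorem mulVec_eq_zero_of_lyapunov {𝕜 : Type*} [RCLike 𝕜] {M X Q : Matrix n n 𝕜}
    {K : Matrix m n 𝕜} {r : ℝ} (hX : X.PosSemidef) (hQ : Q.PosSemidef) (hr : 0 < r)
    (h : Mᴴ * X + X * M + Q + r • (Kᴴ * K) = 0) {μ : 𝕜} {v : n → 𝕜} (hv : M *ᵥ v = μ • v)
    (hμ : 0 ≤ RCLike.re μ) : K *ᵥ v = 0 := by
  have hquad : (2 * RCLike.re μ : 𝕜) * (star v ⬝ᵥ (X *ᵥ v)) + star v ⬝ᵥ (Q *ᵥ v)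
      + r • (star (K *ᵥ v) ⬝ᵥ (K *ᵥ v)) = 0 := by
    have := congrArg (fun N ↦ star v ⬝ᵥ (N *ᵥ v)) h
    simp only [add_mulVec, dotProduct_add, ← mulVec_mulVec, smul_mulVec, dotProduct_smul,
      dotProduct_conjTranspose_mulVec, hv, mulVec_smul, star_smul, smul_dotProduct, zero_mulVec,
      dotProduct_zero] at this
    rw [← this, ← RCLike.add_conj, smul_eq_mul, smul_eq_mul, RCLike.star_def]
    ring
  have hX_term : 0 ≤ (2 * RCLike.re μ : 𝕜) * (star v ⬝ᵥ (X *ᵥ v)) :=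
    mul_nonneg (by exact_mod_cast (by positivity : (0 : ℝ) ≤ 2 * RCLike.re μ))
      (hX.dotProduct_mulVec_nonneg v)
  have hK_term : 0 ≤ r • (star (K *ᵥ v) ⬝ᵥ (K *ᵥ v)) :=
    smul_nonneg hr.le (dotProduct_star_self_nonneg _)
  have hK_zero := ((add_eq_zero_iff_of_nonneg
    (add_nonneg hX_term (hQ.dotProduct_mulVec_nonneg v)) hK_term).mp hquad).2
  rwa [smul_eq_zero_iff_right hr.ne', dotProduct_star_self_eq_zero] at hK_zero

end Matrix

theorem Hurwitz.of_lyapunov [DecidableEq n] {M N X Q : Matrix n n ℝ} {K : Matrix m n ℝ}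
    {L : Matrix n m ℝ} {r : ℝ} (hN : Hurwitz N) (hX : X.PosSemidef) (hQ : Q.PosSemidef)
    (hr : 0 < r) (h : Mᵀ * X + X * M + Q + r • (Kᵀ * K) = 0) (hNM : N = M + L * K) :
    Hurwitz M := by
  intro μ hμ
  by_contra! hre
  obtain ⟨v, hv0, hv⟩ := mem_spectrum_iff_exists_mulVec_eq_smul.mp hμ
  have hC : (M.map Complex.ofReal)ᴴ * X.map Complex.ofReal + X.map Complex.ofReal *
      M.map Complex.ofReal + Q.map Complex.ofReal +
      r • ((K.map Complex.ofReal)ᴴ * K.map Complex.ofReal) = 0 := calc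
    _ = (Mᵀ * X + X * M + Q + r • (Kᵀ * K)).map Complex.ofReal := by
      ext i j; simp [Matrix.mul_apply]
    _ = 0 := by simp [h]
  have hKv := mulVec_eq_zero_of_lyapunov hX.map_ofReal_s8 hQ.map_ofReal_s8 hr hC hv hre
  have hNv : N.map Complex.ofReal *ᵥ v = μ • v := by
    rw [hNM, Matrix.map_add _ Complex.ofReal_add, map_ofReal_mul_s8, add_mulVec, ← mulVec_mulVec,
      hKv, mulVec_zero, add_zero, hv]
  exact (hN μ (mem_spectrum_iff_exists_mulVec_eq_smul.mpr ⟨v, hv0, hNv⟩)).not_ge hre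

theorem riccati_closedLoop_lyapunov {A X Q : Matrix n n ℝ} {B : Matrix n m ℝ} (hXT : Xᵀ = X)
    (hare : Aᵀ * X + X * A - X * B * Bᵀ * X + Q = 0) (c : ℝ) :
    (A - c • (B * Bᵀ * X))ᵀ * X + X * (A - c • (B * Bᵀ * X)) + Q
      + (2 * c - 1) • ((Bᵀ * X)ᵀ * (Bᵀ * X)) = 0 := by
  rw [← hare]
  simp only [transpose_sub, transpose_smul, transpose_mul, transpose_transpose, hXT,
    Matrix.mul_sub, Matrix.sub_mul, Matrix.smul_mul, Matrix.mul_smul, Matrix.mul_assoc]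
  module

/-- If X ≥ 0 is the stabilizing solution of the ARE (A − BBᵀX Hurwitz),
Q ≥ 0, d > 0 and 0 < ε < 2/d, then A − B(εd)⁻¹BᵀX is also Hurwitz. -/
theorem stmt8 {n m : ℕ} (A : Matrix (Fin n) (Fin n) ℝ) (B : Matrix (Fin n) (Fin m) ℝ)
    (Q X : Matrix (Fin n) (Fin n) ℝ) (hQ : Q.PosSemidef) (hX : X.PosSemidef)
    (hare : Aᵀ * X + X * A - X * B * Bᵀ * X + Q = 0)
    (hH : Hurwitz (A - B * Bᵀ * X))
    (d ε : ℝ) (hd : 0 < d) (hε : 0 < ε) (hεd : ε < 2 / d) :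
    Hurwitz (A - (ε * d)⁻¹ • (B * Bᵀ * X)) := by
  have hr : 0 < 2 * (ε * d)⁻¹ - 1 := by
    rw [sub_pos, ← div_eq_mul_inv, one_lt_div (mul_pos hε hd)]
    exact (lt_div_iff₀ hd).mp hεd
  have hXT : Xᵀ = X := by simpa using hX.1.eq
  refine hH.of_lyapunov (L := ((ε * d)⁻¹ - 1) • B) hX hQ hr
    (riccati_closedLoop_lyapunov hXT hare _) ?_
  rw [Matrix.smul_mul, ← Matrix.mul_assoc]
  module
end

section
/- Let (A, B, C) be a stabilizable and detectable realization such that no eigenvalue of A_0 is a transmission zero of P(s) = C(sI − A)^{-1}B, and let F be such that A − BF is Hurwitz. Then the regulator (Francis) equations (A − BF)Π + B F_0 = Π A_0 and CΠ = C_0 admit a solution pair (Π, F_0). -/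
open Matrix

/-!
Writing `G = [Π; -Γ]`, the Francis equations `A Π + B Γ = Π A₀`, `C Π = C₀` say that the
generalized Sylvester operator `G ↦ E G A₀ - D G`, with `μ E - D` the Rosenbrock matrix at `μ`,
hits `[0; C₀]`; a state feedback `F` is absorbed by `F₀ = Γ + F Π`. The operator is onto: a
functional `X ↦ tr (X c)` vanishing on its range satisfies `A₀ c E = c D`, so for every eigenvalue
`μ` of `A₀`, `w (A₀ - μ) c = 0` puts `w c` in the left kernel of `μ E - D`, which is trivial since
`μ` is not a transmission zero. Factoring the characteristic polynomial of `A₀` and using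
Cayley–Hamilton then forces `c = 0`. Real solutions are the real parts of complex ones.
-/

open Polynomial

namespace Matrix

theorem fromRows_sub {α m₁ m₂ n : Type*} [Sub α] (A₁ B₁ : Matrix m₁ n α) (A₂ B₂ : Matrix m₂ n α) :
    fromRows A₁ A₂ - fromRows B₁ B₂ = fromRows (A₁ - B₁) (A₂ - B₂) := by
  ext (i | i) j <;> rfl

variable {K ι κ ν : Type*} [Field K]

theorem vecMul_injective_of_rank_eq_card [Fintype ι] [Fintype κ] {R : Matrix ι κ K}
    (h : R.rank = Fintype.card ι) : Function.Injective R.vecMul :=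
  vecMul_injective_iff.mpr <| linearIndependent_iff_card_eq_finrank_span.mpr <| by
    rw [← h, rank_eq_finrank_span_row]; rfl

theorem exists_dual_eq_trace_mul [Fintype ι] [Fintype κ] (φ : Module.Dual K (Matrix ι κ K)) :
    ∃ c : Matrix κ ι K, ∀ X, φ X = (X * c).trace := by
  classical
  refine ⟨of fun j i => φ (single i j 1), fun X => ?_⟩
  conv_lhs => rw [matrix_eq_sum_single X]
  simp only [map_sum, trace, diag, mul_apply, of_apply]
  refine Fintype.sum_congr _ _ fun i => Fintype.sum_congr _ _ fun j => ?_
  rw [show single i j (X i j) = X i j • single i j (1 : K) by rw [smul_single, smul_eq_mul, mul_one],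
    map_smul, smul_eq_mul]

theorem eq_zero_of_forall_isRoot_charpoly [Fintype ν] [DecidableEq ν] [IsAlgClosed K]
    (M : Matrix ν ν K) (c : Matrix ν ι K)
    (h : ∀ μ, M.charpoly.IsRoot μ → ∀ w, (w ᵥ* M - μ • w) ᵥ* c = 0 → w ᵥ* c = 0) : c = 0 := by
  let Annihilates (q : K[X]) : Prop := ∀ w, w ᵥ* aeval M q ᵥ* c = 0 → w ᵥ* c = 0
  have hchar : Annihilates M.charpoly := by
    rw [(IsAlgClosed.splits _).eq_prod_roots_of_monic M.charpoly_monic]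
    refine Multiset.prod_induction Annihilates _ ?_ (by simp [Annihilates]) ?_
    · intro q r hq hr w hw
      rw [map_mul, ← vecMul_vecMul] at hw
      exact hq w (hr _ hw)
    · intro f hf w hw
      obtain ⟨μ, hμ, rfl⟩ := Multiset.mem_map.mp hf
      refine h μ (isRoot_of_mem_roots hμ) w ?_
      simpa [vecMul_sub, Algebra.algebraMap_eq_smul_one, vecMul_smul] using hw
  refine ext_iff_vecMul.mpr fun w => ?_
  simpa using hchar w (by rw [aeval_self_charpoly]; simp)

variable [Fintype ι] [Fintype κ] [Fintype ν]

@[simps]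
def sylvesterMap (E D : Matrix ι κ K) (M : Matrix ν ν K) : Matrix κ ν K →ₗ[K] Matrix ι ν K where
  toFun G := E * G * M - D * G
  map_add' G G' := by simp only [Matrix.mul_add, Matrix.add_mul]; abel
  map_smul' a G := by simp only [Matrix.mul_smul, Matrix.smul_mul, smul_sub, RingHom.id_apply]

theorem sylvesterMap_surjective [DecidableEq ν] [IsAlgClosed K] {E D : Matrix ι κ K}
    {M : Matrix ν ν K} (h : ∀ μ ∈ spectrum K M, Function.Injective (μ • E - D).vecMul) :
    Function.Surjective (sylvesterMap E D M) := by
  refine LinearMap.dualMap_injective_iff.mp <| (injective_iff_map_eq_zero _).mpr fun φ hφ => ?_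
  obtain ⟨c, hc⟩ := exists_dual_eq_trace_mul φ
  have hcomm : M * c * E = c * D := by
    refine ext_iff_trace_mul_left.mpr fun G => ?_
    have := LinearMap.congr_fun hφ G
    simp only [LinearMap.dualMap_apply, sylvesterMap_apply, hc, LinearMap.zero_apply,
      Matrix.sub_mul, trace_sub, sub_eq_zero] at this
    rw [trace_mul_comm G, trace_mul_comm G, Matrix.mul_assoc, trace_mul_comm, ← Matrix.mul_assoc,
      this, Matrix.mul_assoc, trace_mul_comm]
    exact (trace_mul_cycle c D G).symm
  have hc0 : c = 0 := by
    refine eq_zero_of_forall_isRoot_charpoly M c fun μ hμ w hw => ?_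
    refine h μ (mem_spectrum_of_isRoot_charpoly hμ) ?_
    calc (w ᵥ* c) ᵥ* (μ • E - D) = -((w ᵥ* M - μ • w) ᵥ* c ᵥ* E) := by
          simp only [vecMul_vecMul, vecMul_sub, vecMul_smul, sub_vecMul, smul_vecMul, ← hcomm,
            Matrix.mul_assoc]
          abel
      _ = 0 ᵥ* (μ • E - D) := by rw [hw, zero_vecMul, zero_vecMul, neg_zero]
  ext X
  simp [hc, hc0]

section Real

open Complex

omit [Fintype ι] [Fintype ν] in
theorem map_re_ofReal_mul (X : Matrix ι κ ℝ) (G : Matrix κ ν ℂ) :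
    (X.map ofReal * G).map re = X * G.map re := by
  ext i j
  simp [mul_apply, re_sum]

omit [Fintype ι] [Fintype ν] in
theorem map_re_mul_ofReal (G : Matrix ι κ ℂ) (Y : Matrix κ ν ℝ) :
    (G * Y.map ofReal).map re = G.map re * Y := by
  ext i j
  simp [mul_apply, re_sum]

theorem exists_mul_mul_sub_mul_eq [DecidableEq ν] {E D : Matrix ι κ ℝ} {M : Matrix ν ν ℝ}
    (h : ∀ μ ∈ spectrum ℂ (M.map ofReal),
      Function.Injective (μ • E.map ofReal - D.map ofReal).vecMul)
    (H : Matrix ι ν ℝ) : ∃ G : Matrix κ ν ℝ, E * G * M - D * G = H := by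
  obtain ⟨G, hG⟩ := sylvesterMap_surjective h (H.map ofReal)
  refine ⟨G.map re, ?_⟩
  have := congrArg (map · re) hG
  simp only [sylvesterMap_apply, Matrix.map_sub re sub_re, map_re_ofReal_mul, map_re_mul_ofReal,
    Matrix.map_map] at this
  simpa [Function.comp_def] using this

end Real

end Matrix

open Complex in
theorem exists_francis_solution {n m p q : Type*} [Fintype n] [Fintype m] [Fintype p] [Fintype q]
    [DecidableEq n] [DecidableEq q]
    (A : Matrix n n ℝ) (B : Matrix n m ℝ) (C : Matrix p n ℝ) (A0 : Matrix q q ℝ) (C0 : Matrix p q ℝ)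
    (hzero : ∀ s0 ∈ spectrum ℂ (A0.map ofReal),
      (fromBlocks (s0 • (1 : Matrix n n ℂ) - A.map ofReal) (B.map ofReal) (C.map ofReal) 0).rank =
        Fintype.card n + Fintype.card p) :
    ∃ (P : Matrix n q ℝ) (Γ : Matrix m q ℝ), A * P + B * Γ = P * A0 ∧ C * P = C0 := by
  have hrosenbrock : ∀ μ ∈ spectrum ℂ (A0.map ofReal), Function.Injective
      (μ • (fromBlocks 1 0 0 0 : Matrix (n ⊕ p) (n ⊕ m) ℝ).map ofReal -
        (fromBlocks A (-B) (-C) 0).map ofReal).vecMul := by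
    intro μ hμ
    refine vecMul_injective_of_rank_eq_card ?_
    have hR : μ • (fromBlocks 1 0 0 0 : Matrix (n ⊕ p) (n ⊕ m) ℝ).map ofReal -
        (fromBlocks A (-B) (-C) 0).map ofReal =
        fromBlocks (μ • (1 : Matrix n n ℂ) - A.map ofReal) (B.map ofReal) (C.map ofReal) 0 := by
      ext (i | i) (j | j) <;> simp [one_apply, apply_ite]
    rw [hR, hzero μ hμ, Fintype.card_sum]
  obtain ⟨G, hG⟩ := exists_mul_mul_sub_mul_eq hrosenbrock (fromRows 0 C0)
  rw [← fromRows_toRows G] at hG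
  simp only [fromBlocks_mul_fromRows, fromRows_mul, fromRows_sub, Matrix.one_mul, Matrix.zero_mul,
    add_zero, Matrix.neg_mul] at hG
  obtain ⟨hstate, houtput⟩ := fromRows_inj hG
  refine ⟨G.toRows₁, -G.toRows₂, ?_, by simpa using houtput⟩
  rw [Matrix.mul_neg]
  exact (sub_eq_zero.mp hstate).symm

theorem stmt13_general {n m p n0 : ℕ}
    (A : Matrix (Fin n) (Fin n) ℝ) (B : Matrix (Fin n) (Fin m) ℝ)
    (C : Matrix (Fin p) (Fin n) ℝ)
    (A0 : Matrix (Fin n0) (Fin n0) ℝ) (C0 : Matrix (Fin p) (Fin n0) ℝ)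
    (F : Matrix (Fin m) (Fin n) ℝ)
    (hzero : ∀ s0 ∈ spectrum ℂ (A0.map Complex.ofReal),
      (Matrix.fromBlocks (s0 • (1 : Matrix (Fin n) (Fin n) ℂ) - A.map Complex.ofReal)
        (B.map Complex.ofReal) (C.map Complex.ofReal) 0).rank = n + p) :
    ∃ (P : Matrix (Fin n) (Fin n0) ℝ) (F0 : Matrix (Fin m) (Fin n0) ℝ),
      (A - B * F) * P + B * F0 = P * A0 ∧ C * P = C0 := by
  obtain ⟨P, Γ, hstate, houtput⟩ :=
    exists_francis_solution A B C A0 C0 (by simpa only [Fintype.card_fin] using hzero)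
  refine ⟨P, Γ + F * P, ?_, houtput⟩
  rw [← hstate, Matrix.sub_mul, Matrix.mul_add, Matrix.mul_assoc]
  abel

/-- For a stabilizable and detectable realization (A,B,C) such that no
eigenvalue of A₀ is a transmission zero of P(s) = C(sI − A)⁻¹B, and A − BF Hurwitz,
the regulator (Francis) equations (A − BF)Π + BF₀ = ΠA₀, CΠ = C₀ are solvable. -/
theorem stmt13 {n m p n0 : ℕ}
    (A : Matrix (Fin n) (Fin n) ℝ) (B : Matrix (Fin n) (Fin m) ℝ)
    (C : Matrix (Fin p) (Fin n) ℝ)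
    (A0 : Matrix (Fin n0) (Fin n0) ℝ) (C0 : Matrix (Fin p) (Fin n0) ℝ)
    (F : Matrix (Fin m) (Fin n) ℝ)
    (hmp : p ≤ m)
    (hA0 : ∀ μ ∈ spectrum ℂ (A0.map Complex.ofReal), μ.re = 0)
    (hstab : ∀ s : ℂ, 0 ≤ s.re →
      (Matrix.fromCols (s • (1 : Matrix (Fin n) (Fin n) ℂ) - A.map Complex.ofReal)
        (B.map Complex.ofReal)).rank = n)
    (hdet : ∀ s : ℂ, 0 ≤ s.re →
      (Matrix.fromRows (s • (1 : Matrix (Fin n) (Fin n) ℂ) - A.map Complex.ofReal)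
        (C.map Complex.ofReal)).rank = n)
    (hzero : ∀ s0 ∈ spectrum ℂ (A0.map Complex.ofReal),
      (Matrix.fromBlocks (s0 • (1 : Matrix (Fin n) (Fin n) ℂ) - A.map Complex.ofReal)
        (B.map Complex.ofReal) (C.map Complex.ofReal) 0).rank = n + p)
    (hH : Hurwitz (A - B * F)) :
    ∃ (P : Matrix (Fin n) (Fin n0) ℝ) (F0 : Matrix (Fin m) (Fin n0) ℝ),
      (A - B * F) * P + B * F0 = P * A0 ∧ C * P = C0 :=
  stmt13_general A B C A0 C0 F hzero
end

section
/- Suppose Π and F_0 satisfy the regulator equations (A − BF)Π + B F_0 = Π A_0 and CΠ = C_0, where A − BF is Hurwitz. Then for the cascade system ẋ = (A − BF)x + B F_0 x_0, ẋ_0 = A_0 x_0, the output error e(t) = C x(t) − C_0 x_0(t) tends to 0 as t → ∞ for all initial conditions. -/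
/-! The deviation `x̃ = x - Π x₀` from the regulator manifold obeys `x̃' = (A - BF) x̃` by the
first regulator equation, and `e = C x̃` by the second, so it suffices that every solution of
`y' = M y` with `M` Hurwitz tends to `0`. Over `ℂ` such a solution is `exp (t M) y(0)`. Split
`y(0)` into generalized eigenvectors of `M`: on the one for `μ` the exponential series of
`t (M - μ)` terminates, so that component is `e^{tμ}` times a polynomial in `t`, which decays
because `Re μ < 0`. -/

open Matrix Filter

open NormedSpace Topology

theorem HasDerivAt.const_mulVec {𝕜 m n : Type*} [RCLike 𝕜] [Fintype m] [Fintype n]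
    (M : Matrix m n 𝕜) {v : ℝ → n → 𝕜} {v' : n → 𝕜} {t : ℝ} (hv : HasDerivAt v v' t) :
    HasDerivAt (fun s => M *ᵥ v s) (M *ᵥ v') t :=
  (M.mulVecLin.restrictScalars ℝ).toContinuousLinearMap.hasFDerivAt.comp_hasDerivAt t hv

theorem Complex.tendsto_pow_mul_exp_mul_atTop_nhds_zero {μ : ℂ} (hμ : μ.re < 0) (i : ℕ) :
    Tendsto (fun t : ℝ => (t : ℂ) ^ i * Complex.exp (t * μ)) atTop (𝓝 0) := by
  rw [tendsto_zero_iff_norm_tendsto_zero]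
  refine (tendsto_rpow_mul_exp_neg_mul_atTop_nhds_zero i (-μ.re) (by linarith)).congr' ?_
  filter_upwards [eventually_ge_atTop 0] with t ht
  simp [Complex.norm_exp, abs_of_nonneg ht, mul_comm]

section MatrixExp

-- Only the topology matters for the statements below; any submultiplicative norm would do.
attribute [local instance] Matrix.linftyOpNormedAddCommGroup Matrix.linftyOpNormedSpace
  Matrix.linftyOpNormedRing Matrix.linftyOpNormedAlgebra

theorem HasDerivAt.mulVec_const {κ ι 𝕜 : Type*} [Fintype κ] [Fintype ι] [RCLike 𝕜]
    {A : ℝ → Matrix κ ι 𝕜} {A' : Matrix κ ι 𝕜} {t : ℝ} (hA : HasDerivAt A A' t) (v : ι → 𝕜) :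
    HasDerivAt (fun s => A s *ᵥ v) (A' *ᵥ v) t :=
  let evalAt : Matrix κ ι 𝕜 →L[ℝ] κ → 𝕜 :=
    (((mulVecBilin 𝕜 𝕜).flip v).restrictScalars ℝ).toContinuousLinearMap
  evalAt.hasFDerivAt.comp_hasDerivAt t hA

namespace Matrix

variable {ι 𝕜 : Type*} [Fintype ι] [DecidableEq ι] [RCLike 𝕜]

theorem exp_mulVec_eq_sum {N : Matrix ι ι 𝕜} {w : ι → 𝕜} {j : ℕ} (hw : N ^ j *ᵥ w = 0) :
    exp N *ᵥ w = ∑ i ∈ Finset.range j, (i.factorial⁻¹ : 𝕜) • (N ^ i *ᵥ w) := by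
  let evalAt : Matrix ι ι 𝕜 →L[𝕜] ι → 𝕜 := ((mulVecBilin 𝕜 𝕜).flip w).toContinuousLinearMap
  have hvanish : ∀ i ∉ Finset.range j, (i.factorial⁻¹ : 𝕜) • (N ^ i *ᵥ w) = 0 := fun i hi => by
    rw [← Nat.sub_add_cancel (not_lt.mp (Finset.mem_range.not.mp hi)), pow_add, ← mulVec_mulVec,
      hw, mulVec_zero, smul_zero]
  calc exp N *ᵥ w = evalAt (∑' i : ℕ, (i.factorial⁻¹ : 𝕜) • N ^ i) := by rw [exp_eq_tsum 𝕜]; rfl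
    _ = ∑' i : ℕ, (i.factorial⁻¹ : 𝕜) • (N ^ i *ᵥ w) := by
      rw [evalAt.map_tsum (expSeries_summable' (𝕂 := 𝕜) N)]
      simp [evalAt]
    _ = _ := tsum_eq_sum hvanish

theorem eq_exp_smul_mulVec_of_hasDerivAt {M : Matrix ι ι 𝕜} {y : ℝ → ι → 𝕜}
    (hy : ∀ t, HasDerivAt y (M *ᵥ y t) t) (t : ℝ) :
    y t = exp (t • M) *ᵥ y 0 := by
  let L := (M.mulVecLin.restrictScalars ℝ).toContinuousLinearMap
  have hexp : ∀ s : ℝ, HasDerivAt (fun s : ℝ => exp (s • M) *ᵥ y 0)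
      (M *ᵥ (exp (s • M) *ᵥ y 0)) s := fun s => by
    rw [mulVec_mulVec]
    exact (hasDerivAt_exp_smul_const' M s).mulVec_const (y 0)
  have hunique := ODE_solution_unique_univ (v := fun _ z => M *ᵥ z) (s := fun _ => Set.univ)
    (t₀ := 0) (fun _ => L.lipschitz.lipschitzOnWith) (fun s => ⟨hy s, trivial⟩)
    (fun s => ⟨hexp s, trivial⟩) (by simp)
  exact congr_fun hunique t

theorem tendsto_exp_smul_mulVec_of_pow_sub_mulVec_eq_zero {M : Matrix ι ι ℂ} {μ : ℂ}
    (hμ : μ.re < 0) {j : ℕ} {w : ι → ℂ} (hw : (M - μ • 1) ^ j *ᵥ w = 0) :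
    Tendsto (fun t : ℝ => exp (t • M) *ᵥ w) atTop (𝓝 0) := by
  set N := M - μ • 1
  have hexpand : ∀ t : ℝ, exp (t • M) *ᵥ w = ∑ i ∈ Finset.range j,
      ((t : ℂ) ^ i * Complex.exp (t * μ) * (i.factorial⁻¹ : ℂ)) • (N ^ i *ᵥ w) := by
    intro t
    have hsplit : t • M = algebraMap ℂ _ (t * μ) + (t : ℂ) • N := by
      simp [N, Algebra.algebraMap_eq_smul_one, smul_sub, smul_smul]
    have hscalar : exp (algebraMap ℂ (Matrix ι ι ℂ) (t * μ)) =
        algebraMap ℂ _ (Complex.exp (t * μ)) := by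
      rw [Complex.exp_eq_exp_ℂ]
      exact (algebraMap_exp_comm _).symm
    have htw : ((t : ℂ) • N) ^ j *ᵥ w = 0 := by rw [smul_pow, smul_mulVec, hw, smul_zero]
    rw [hsplit, exp_add_of_commute _ _ (Algebra.commute_algebraMap_left _ _), hscalar,
      Algebra.algebraMap_eq_smul_one, smul_mul_assoc, one_mul, smul_mulVec,
      exp_mulVec_eq_sum htw, Finset.smul_sum]
    refine Finset.sum_congr rfl fun i _ => ?_
    rw [smul_pow, smul_mulVec, smul_smul, smul_smul]
    ring_nf
  simp_rw [hexpand]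
  rw [← Finset.sum_const_zero (s := Finset.range j)]
  refine tendsto_finsetSum _ fun i _ => ?_
  simpa using ((Complex.tendsto_pow_mul_exp_mul_atTop_nhds_zero hμ i).mul_const _).smul_const
    (N ^ i *ᵥ w)

theorem tendsto_exp_smul_mulVec_of_spectrum {M : Matrix ι ι ℂ}
    (hM : ∀ μ ∈ spectrum ℂ M, μ.re < 0) (v : ι → ℂ) :
    Tendsto (fun t : ℝ => exp (t • M) *ᵥ v) atTop (𝓝 0) := by
  let f : Module.End ℂ (ι → ℂ) := toLinAlgEquiv' M
  have hv : v ∈ ⨆ μ, f.maxGenEigenspace μ := by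
    rw [Module.End.iSup_maxGenEigenspace_eq_top]; trivial
  induction hv using Submodule.iSup_induction' with
  | mem μ w hw =>
    rcases eq_or_ne w 0 with rfl | hw0
    · simp
    have hμ : μ ∈ spectrum ℂ M := by
      rw [← spectrum_toLin']
      have hgen : f.HasUnifEigenvalue μ ⊤ := (Submodule.ne_bot_iff _).2 ⟨w, hw, hw0⟩
      exact (hgen.lt zero_lt_one).mem_spectrum
    obtain ⟨j, hj⟩ := (Module.End.mem_maxGenEigenspace f μ w).1 hw
    refine tendsto_exp_smul_mulVec_of_pow_sub_mulVec_eq_zero (hM μ hμ) (j := j) ?_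
    rw [← hj, ← toLinAlgEquiv'_apply]
    simp [f]
  | zero => simp
  | add w₁ w₂ _ _ h₁ h₂ => simpa [mulVec_add] using h₁.add h₂

end Matrix

end MatrixExp

theorem Hurwitz.tendsto_of_hasDerivAt {ι : Type*} [Fintype ι] [DecidableEq ι]
    {M : Matrix ι ι ℝ} (hM : Hurwitz M) {y : ℝ → ι → ℝ}
    (hy : ∀ t, HasDerivAt y (M *ᵥ y t) t) : Tendsto y atTop (𝓝 0) := by
  let z : ℝ → ι → ℂ := fun t i => y t i
  have hz : ∀ t, HasDerivAt z (M.map Complex.ofReal *ᵥ z t) t := fun t =>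
    hasDerivAt_pi.2 fun i => (hasDerivAt_pi.1 (hy t) i).ofReal_comp.congr_deriv
      (RingHom.map_mulVec Complex.ofRealHom M (y t) i)
  have hz0 : Tendsto z atTop (𝓝 0) := by
    simpa [← eq_exp_smul_mulVec_of_hasDerivAt hz] using
      tendsto_exp_smul_mulVec_of_spectrum hM (z 0)
  have hre : Continuous fun w : ι → ℂ => fun i => (w i).re := by fun_prop
  simpa [z, Function.comp_def, Pi.zero_def] using (hre.tendsto 0).comp hz0

/-- If Π, F₀ satisfy the regulator equations (A − BF)Π + BF₀ = ΠA₀,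
CΠ = C₀ with A − BF Hurwitz, then for the cascade ẋ = (A − BF)x + BF₀x₀,
ẋ₀ = A₀x₀, the error e(t) = Cx(t) − C₀x₀(t) → 0 as t → ∞ for all initial
conditions. -/
theorem stmt14 {n m p n0 : ℕ}
    (A : Matrix (Fin n) (Fin n) ℝ) (B : Matrix (Fin n) (Fin m) ℝ)
    (C : Matrix (Fin p) (Fin n) ℝ)
    (A0 : Matrix (Fin n0) (Fin n0) ℝ) (C0 : Matrix (Fin p) (Fin n0) ℝ)
    (F : Matrix (Fin m) (Fin n) ℝ)
    (P : Matrix (Fin n) (Fin n0) ℝ) (F0 : Matrix (Fin m) (Fin n0) ℝ)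
    (hH : Hurwitz (A - B * F))
    (hreg : (A - B * F) * P + B * F0 = P * A0) (hC : C * P = C0)
    (x : ℝ → Fin n → ℝ) (x0 : ℝ → Fin n0 → ℝ)
    (hx0 : ∀ t, HasDerivAt x0 (A0 *ᵥ x0 t) t)
    (hx : ∀ t, HasDerivAt x ((A - B * F) *ᵥ x t + B *ᵥ (F0 *ᵥ x0 t)) t) :
    Tendsto (fun t => C *ᵥ x t - C0 *ᵥ x0 t) atTop (nhds 0) := by
  have hdeviation : ∀ t, HasDerivAt (fun s => x s - P *ᵥ x0 s)
      ((A - B * F) *ᵥ (x t - P *ᵥ x0 t)) t := fun t => by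
    refine ((hx t).sub ((hx0 t).const_mulVec P)).congr_deriv ?_
    rw [mulVec_sub, mulVec_mulVec, mulVec_mulVec, mulVec_mulVec, ← hreg, add_mulVec]
    abel
  have hlim := ((continuous_const (y := C).matrix_mulVec continuous_id).tendsto 0).comp
    (hH.tendsto_of_hasDerivAt hdeviation)
  simpa [Function.comp_def, mulVec_sub, mulVec_mulVec, hC] using hlim
end
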